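/- arXiv:0905.3460 — 2 statements merged into one kernel-verified Lean document; each statement's English description precedes it below -/
import Mathlib

section
/- Let θ ∈ (0, π/2) and let u be a model eigenfunction of H(θ) with eigenvalue σ, and set f₀ := (2 sin(2θ))⁻¹ (sin²θ · s² u − ∂_s² u). Then (H(θ) − σ) ∂_s f₀ = −t ∂_s² u + 2 sin θ · V_θ f₀ on ℝ²₊, and ∫_{ℝ²₊} (−t ∂_s² u + 2 sin θ · V_θ f₀) u ds dt = 0. -/
open Real MeasureTheory Set

noncomputable section

/-- Partial derivative with respect to the first variable. -/
def pd1 (u : ℝ → ℝ → ℝ) : ℝ → ℝ → ℝ := fun s t => deriv (fun x => u x t) s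

/-- Partial derivative with respect to the second variable. -/
def pd2 (u : ℝ → ℝ → ℝ) : ℝ → ℝ → ℝ := fun s t => deriv (fun y => u s y) t

/-- The potential `V_θ(s,t) = t cos θ − s sin θ`. -/
def Vpot (θ : ℝ) : ℝ → ℝ → ℝ := fun s t => t * Real.cos θ - s * Real.sin θ

/-- The operator `H(θ) = −∂_s² − ∂_t² + V_θ²` applied to `u`. -/
def Hop (θ : ℝ) (u : ℝ → ℝ → ℝ) : ℝ → ℝ → ℝ :=
  fun s t => - pd1 (pd1 u) s t - pd2 (pd2 u) s t + (Vpot θ s t)^2 * u s t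

/-- Integral over the half-plane `{t > 0}` with respect to `ds dt`. -/
def intHalf (f : ℝ → ℝ → ℝ) : ℝ := ∫ s : ℝ, ∫ t in Set.Ioi (0:ℝ), f s t

/-- Schwartz-class on the closed half-plane: all iterated partial derivatives decay
faster than any power of `|s| + t`. -/
def SchwartzHalf (u : ℝ → ℝ → ℝ) : Prop :=
  ∀ k l n : ℕ, ∃ C : ℝ, ∀ s t : ℝ, 0 ≤ t →
    |pd1^[k] (pd2^[l] u) s t| ≤ C * (1 + |s| + t) ^ (-(n:ℝ))

/-- A model eigenfunction of `H(θ)` with eigenvalue `σ`: smooth up to the boundary,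
Schwartz-class, `L²`-normalized, Neumann boundary condition, and `H(θ)u = σu` on `{t ≥ 0}`. -/
structure IsModelEigen (θ : ℝ) (u : ℝ → ℝ → ℝ) (σ : ℝ) : Prop where
  smooth : ∀ n : ℕ, ContDiff ℝ n (fun p : ℝ × ℝ => u p.1 p.2)
  schwartz : SchwartzHalf u
  normalized : intHalf (fun s t => (u s t)^2) = 1
  neumann : ∀ s : ℝ, pd2 u s 0 = 0
  eigen : ∀ s t : ℝ, 0 ≤ t → Hop θ u s t = σ * u s t

/-!
Two commutator identities drive the pointwise formula: `[H(θ), ∂_s] = 2 sin θ · V_θ`, because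
`∂_s V_θ = -sin θ`, and `[H(θ), s] = -2 ∂_s`. Applied to the eigenfunction `u` they give
`(H(θ) - σ) f₀ = -4 sin θ (2 sin 2θ)⁻¹ (s sin θ + V_θ) ∂_s u = -t ∂_s u`, and commuting once more
with `∂_s` yields the formula for `(H(θ) - σ) ∂_s f₀`.

On `ℝ²₊` the integrand is then `((H(θ) - σ) ∂_s f₀) u - ∂_s f₀ · (H(θ) - σ) u`. Both `∂_s f₀` and `u`
are Schwartz functions satisfying the Neumann condition, so Green's formula, i.e. integrating
`∂_s (v ∂_s w - w ∂_s v)` along horizontal lines and `∂_t (v ∂_t w - w ∂_t v)` along vertical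
half-lines, makes the integral vanish.
-/

open Filter
open scoped ContDiff

def Smooth₂ (w : ℝ → ℝ → ℝ) : Prop := ContDiff ℝ ∞ (Function.uncurry w)

section Slices

variable {E : Type*} [NormedAddCommGroup E] [NormedSpace ℝ E] {G : ℝ × ℝ → E} {s t : ℝ}

theorem hasDerivAt_slice_fst (hG : DifferentiableAt ℝ G (s, t)) :
    HasDerivAt (fun x => G (x, t)) (fderiv ℝ G (s, t) (1, 0)) s :=
  hG.hasFDerivAt.comp_hasDerivAt s ((hasDerivAt_id s).prodMk (hasDerivAt_const s t))

theorem hasDerivAt_slice_snd (hG : DifferentiableAt ℝ G (s, t)) :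
    HasDerivAt (fun y => G (s, y)) (fderiv ℝ G (s, t) (0, 1)) t :=
  hG.hasFDerivAt.comp_hasDerivAt t ((hasDerivAt_const t s).prodMk (hasDerivAt_id t))

end Slices

theorem pd1_eq_of_hasDerivAt {w : ℝ → ℝ → ℝ} {F : ℝ → ℝ} {s t d : ℝ}
    (hF : ∀ x, w x t = F x) (h : HasDerivAt F d s) : pd1 w s t = d := by
  rw [pd1, funext hF]
  exact h.deriv

theorem pd1_smul (c : ℝ) (w : ℝ → ℝ → ℝ) : pd1 (c • w) = c • pd1 w :=
  funext₂ fun s t => congrFun (deriv_const_mul_field' (v := fun x => w x t) c) s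

theorem pd2_smul (c : ℝ) (w : ℝ → ℝ → ℝ) : pd2 (c • w) = c • pd2 w :=
  funext₂ fun s t => congrFun (deriv_const_mul_field' (v := fun y => w s y) c) t

theorem pd2_mul_fst (w : ℝ → ℝ → ℝ) :
    pd2 (fun s t => s * w s t) = fun s t => s * pd2 w s t :=
  funext₂ fun s t => congrFun (deriv_const_mul_field' (v := fun y => w s y) s) t

namespace Smooth₂

variable {w f g : ℝ → ℝ → ℝ}

theorem differentiableAt (hw : Smooth₂ w) (p : ℝ × ℝ) :
    DifferentiableAt ℝ (Function.uncurry w) p :=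
  hw.differentiable (by simp) p

theorem continuous (hw : Smooth₂ w) : Continuous (Function.uncurry w) :=
  ContDiff.continuous hw

theorem pd1_eq_fderiv (hw : Smooth₂ w) (s t : ℝ) :
    pd1 w s t = fderiv ℝ (Function.uncurry w) (s, t) (1, 0) :=
  (hasDerivAt_slice_fst (hw.differentiableAt _)).deriv

theorem pd2_eq_fderiv (hw : Smooth₂ w) (s t : ℝ) :
    pd2 w s t = fderiv ℝ (Function.uncurry w) (s, t) (0, 1) :=
  (hasDerivAt_slice_snd (hw.differentiableAt _)).deriv

theorem hasDerivAt_pd1 (hw : Smooth₂ w) (s t : ℝ) :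
    HasDerivAt (fun x => w x t) (pd1 w s t) s :=
  (hasDerivAt_slice_fst (hw.differentiableAt (s, t))).differentiableAt.hasDerivAt

theorem hasDerivAt_pd2 (hw : Smooth₂ w) (s t : ℝ) :
    HasDerivAt (fun y => w s y) (pd2 w s t) t :=
  (hasDerivAt_slice_snd (hw.differentiableAt (s, t))).differentiableAt.hasDerivAt

theorem fderiv_apply (hw : Smooth₂ w) (v : ℝ × ℝ) :
    Smooth₂ fun s t => fderiv ℝ (Function.uncurry w) (s, t) v :=
  (hw.fderiv_right (m := ∞) le_rfl).clm_apply contDiff_const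

protected theorem pd1 (hw : Smooth₂ w) : Smooth₂ (pd1 w) :=
  (funext₂ hw.pd1_eq_fderiv : pd1 w = _) ▸ hw.fderiv_apply _

protected theorem pd2 (hw : Smooth₂ w) : Smooth₂ (pd2 w) :=
  (funext₂ hw.pd2_eq_fderiv : pd2 w = _) ▸ hw.fderiv_apply _

theorem pd1_pd2_comm (hw : Smooth₂ w) : pd1 (pd2 w) = pd2 (pd1 w) := by
  funext s t
  set F := Function.uncurry w
  have hF : DifferentiableAt ℝ (fderiv ℝ F) (s, t) :=
    (hw.fderiv_right (m := ∞) le_rfl).differentiable (by simp) _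
  have h12 : pd1 (pd2 w) s t = fderiv ℝ (fderiv ℝ F) (s, t) (1, 0) (0, 1) := by
    have := (hasDerivAt_slice_fst hF).clm_apply (hasDerivAt_const s ((0 : ℝ), (1 : ℝ)))
    simp only [map_zero, add_zero] at this
    rw [show pd2 w = fun s t => fderiv ℝ F (s, t) (0, 1) from funext₂ hw.pd2_eq_fderiv]
    exact this.deriv
  have h21 : pd2 (pd1 w) s t = fderiv ℝ (fderiv ℝ F) (s, t) (0, 1) (1, 0) := by
    have := (hasDerivAt_slice_snd hF).clm_apply (hasDerivAt_const t ((1 : ℝ), (0 : ℝ)))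
    simp only [map_zero, add_zero] at this
    rw [show pd1 w = fun s t => fderiv ℝ F (s, t) (1, 0) from funext₂ hw.pd1_eq_fderiv]
    exact this.deriv
  rw [h12, h21, hw.contDiffAt.isSymmSndFDerivAt (by simp; exact WithTop.coe_le_coe.2 le_top)]

theorem pd2_pd1_eq_zero (hw : Smooth₂ w) (hN : ∀ s, pd2 w s 0 = 0) (s : ℝ) :
    pd2 (pd1 w) s 0 = 0 := by
  rw [← hw.pd1_pd2_comm]
  exact pd1_eq_of_hasDerivAt hN (hasDerivAt_const s 0)

protected theorem add (hf : Smooth₂ f) (hg : Smooth₂ g) : Smooth₂ (f + g) :=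
  ContDiff.add hf hg

protected theorem sub (hf : Smooth₂ f) (hg : Smooth₂ g) : Smooth₂ (f - g) :=
  ContDiff.sub hf hg

protected theorem mul (hf : Smooth₂ f) (hg : Smooth₂ g) : Smooth₂ (f * g) :=
  ContDiff.mul hf hg

protected theorem smul (hw : Smooth₂ w) (c : ℝ) : Smooth₂ (c • w) :=
  ContDiff.const_smul c hw

theorem mul_fst (hw : Smooth₂ w) : Smooth₂ fun s t => s * w s t :=
  contDiff_fst.mul hw

theorem pd1_add (hf : Smooth₂ f) (hg : Smooth₂ g) : pd1 (f + g) = pd1 f + pd1 g :=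
  funext₂ fun s t => ((hf.hasDerivAt_pd1 s t).add (hg.hasDerivAt_pd1 s t)).deriv

theorem pd2_add (hf : Smooth₂ f) (hg : Smooth₂ g) : pd2 (f + g) = pd2 f + pd2 g :=
  funext₂ fun s t => ((hf.hasDerivAt_pd2 s t).add (hg.hasDerivAt_pd2 s t)).deriv

theorem pd1_sub (hf : Smooth₂ f) (hg : Smooth₂ g) : pd1 (f - g) = pd1 f - pd1 g :=
  funext₂ fun s t => ((hf.hasDerivAt_pd1 s t).sub (hg.hasDerivAt_pd1 s t)).deriv

theorem pd2_sub (hf : Smooth₂ f) (hg : Smooth₂ g) : pd2 (f - g) = pd2 f - pd2 g :=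
  funext₂ fun s t => ((hf.hasDerivAt_pd2 s t).sub (hg.hasDerivAt_pd2 s t)).deriv

theorem pd1_mul (hf : Smooth₂ f) (hg : Smooth₂ g) : pd1 (f * g) = pd1 f * g + f * pd1 g :=
  funext₂ fun s t => ((hf.hasDerivAt_pd1 s t).mul (hg.hasDerivAt_pd1 s t)).deriv

theorem pd2_mul (hf : Smooth₂ f) (hg : Smooth₂ g) : pd2 (f * g) = pd2 f * g + f * pd2 g :=
  funext₂ fun s t => ((hf.hasDerivAt_pd2 s t).mul (hg.hasDerivAt_pd2 s t)).deriv

theorem pd1_mul_fst (hw : Smooth₂ w) :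
    pd1 (fun s t => s * w s t) = w + fun s t => s * pd1 w s t :=
  funext₂ fun s t => (((hasDerivAt_id s).mul (hw.hasDerivAt_pd1 s t)).deriv).trans (by simp)

theorem iterate_pd1 (hw : Smooth₂ w) (k : ℕ) : Smooth₂ (pd1^[k] w) :=
  Function.Iterate.rec Smooth₂ hw (fun _ h => h.pd1) k

theorem iterate_pd2 (hw : Smooth₂ w) (l : ℕ) : Smooth₂ (pd2^[l] w) :=
  Function.Iterate.rec Smooth₂ hw (fun _ h => h.pd2) l

theorem iterate_pd2_pd1 (hw : Smooth₂ w) (l : ℕ) : pd2^[l] (pd1 w) = pd1 (pd2^[l] w) := by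
  induction l with
  | zero => rfl
  | succ l ih =>
    rw [Function.iterate_succ_apply', Function.iterate_succ_apply', ih,
      (hw.iterate_pd2 l).pd1_pd2_comm]

theorem iterate_pd1_mul_fst (hw : Smooth₂ w) (k : ℕ) :
    pd1^[k + 1] (fun s t => s * w s t)
      = (fun s t => s * pd1^[k + 1] w s t) + ((k : ℝ) + 1) • pd1^[k] w := by
  induction k with
  | zero =>
    funext s t
    simp [hw.pd1_mul_fst, add_comm]
  | succ k ih =>
    rw [Function.iterate_succ_apply', ih, ((hw.iterate_pd1 (k + 1)).mul_fst).pd1_add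
      ((hw.iterate_pd1 k).smul _), (hw.iterate_pd1 (k + 1)).pd1_mul_fst, pd1_smul,
      ← Function.iterate_succ_apply' pd1 (k + 1), ← Function.iterate_succ_apply' pd1 k]
    funext s t
    simp only [Pi.add_apply, Pi.smul_apply, smul_eq_mul]
    push_cast
    ring

end Smooth₂

theorem iterate_map_add_of_smooth₂ {D : (ℝ → ℝ → ℝ) → ℝ → ℝ → ℝ}
    (hD : ∀ f g, Smooth₂ f → Smooth₂ g → D (f + g) = D f + D g)
    (hDs : ∀ f, Smooth₂ f → Smooth₂ (D f)) (n : ℕ) {f g : ℝ → ℝ → ℝ}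
    (hf : Smooth₂ f) (hg : Smooth₂ g) : D^[n] (f + g) = D^[n] f + D^[n] g := by
  induction n generalizing f g with
  | zero => rfl
  | succ n ih =>
    rw [Function.iterate_succ_apply, Function.iterate_succ_apply, Function.iterate_succ_apply,
      hD f g hf hg, ih (hDs f hf) (hDs g hg)]

section Commutators

variable {θ : ℝ} {w f g : ℝ → ℝ → ℝ}

theorem hop_add (hf : Smooth₂ f) (hg : Smooth₂ g) : Hop θ (f + g) = Hop θ f + Hop θ g := by
  funext s t
  simp only [Hop, hf.pd1_add hg, hf.pd1.pd1_add hg.pd1, hf.pd2_add hg, hf.pd2.pd2_add hg.pd2,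
    Pi.add_apply]
  ring

theorem hop_smul (c : ℝ) (w : ℝ → ℝ → ℝ) : Hop θ (c • w) = c • Hop θ w := by
  funext s t
  simp only [Hop, pd1_smul, pd2_smul, Pi.smul_apply, smul_eq_mul]
  ring

theorem hasDerivAt_vpot_fst (θ s t : ℝ) : HasDerivAt (fun x => Vpot θ x t) (-sin θ) s :=
  ((hasDerivAt_const s (t * cos θ)).sub ((hasDerivAt_id s).mul_const (sin θ))).congr_deriv
    (by ring)

theorem Smooth₂.hop_pd1 (hw : Smooth₂ w) (s t : ℝ) :
    Hop θ (pd1 w) s t = pd1 (Hop θ w) s t + 2 * sin θ * Vpot θ s t * w s t := by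
  have h : HasDerivAt (fun x => Hop θ w x t)
      (-pd1 (pd1 (pd1 w)) s t - pd1 (pd2 (pd2 w)) s t
        + (2 * Vpot θ s t * (-sin θ) * w s t + Vpot θ s t ^ 2 * pd1 w s t)) s :=
    (((hw.pd1.pd1.hasDerivAt_pd1 s t).neg.sub (hw.pd2.pd2.hasDerivAt_pd1 s t)).add
      (((hasDerivAt_vpot_fst θ s t).pow 2).mul (hw.hasDerivAt_pd1 s t))).congr_deriv (by simp)
  rw [pd1_eq_of_hasDerivAt (fun _ => rfl) h, hw.pd2.pd1_pd2_comm, hw.pd1_pd2_comm]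
  simp only [Hop]
  ring

theorem Smooth₂.hop_mul_fst (hw : Smooth₂ w) (s t : ℝ) :
    Hop θ (fun s t => s * w s t) s t = s * Hop θ w s t - 2 * pd1 w s t := by
  simp only [Hop, pd2_mul_fst]
  rw [hw.pd1_mul_fst, hw.pd1_add hw.pd1.mul_fst, hw.pd1.pd1_mul_fst]
  simp only [Pi.add_apply]
  ring

end Commutators

def RapidDecay (f : ℝ → ℝ → ℝ) : Prop :=
  ∀ n : ℕ, ∃ C, ∀ s t, 0 ≤ t → |f s t| ≤ C / (1 + |s| + t) ^ n

theorem SchwartzHalf.rapidDecay {u : ℝ → ℝ → ℝ} (hu : SchwartzHalf u) (k l : ℕ) :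
    RapidDecay (pd1^[k] (pd2^[l] u)) := fun n => by
  obtain ⟨C, hC⟩ := hu k l n
  refine ⟨C, fun s t ht => (hC s t ht).trans_eq ?_⟩
  rw [rpow_neg (by positivity), rpow_natCast, div_eq_mul_inv]

namespace RapidDecay

variable {f g : ℝ → ℝ → ℝ}

protected theorem add (hf : RapidDecay f) (hg : RapidDecay g) : RapidDecay (f + g) := fun n => by
  obtain ⟨C, hC⟩ := hf n
  obtain ⟨D, hD⟩ := hg n
  refine ⟨C + D, fun s t ht => (abs_add_le (f s t) (g s t)).trans ?_⟩
  rw [add_div]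
  exact add_le_add (hC s t ht) (hD s t ht)

protected theorem smul (hf : RapidDecay f) (c : ℝ) : RapidDecay (c • f) := fun n => by
  obtain ⟨C, hC⟩ := hf n
  refine ⟨|c| * C, fun s t ht => ?_⟩
  rw [Pi.smul_apply, Pi.smul_apply, smul_eq_mul, abs_mul, mul_div_assoc]
  exact mul_le_mul_of_nonneg_left (hC s t ht) (abs_nonneg c)

protected theorem sub (hf : RapidDecay f) (hg : RapidDecay g) : RapidDecay (f - g) := by
  simpa [sub_eq_add_neg] using hf.add (hg.smul (-1))

protected theorem mul (hf : RapidDecay f) (hg : RapidDecay g) : RapidDecay (f * g) := fun n => by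
  obtain ⟨C, hC⟩ := hf 0
  obtain ⟨D, hD⟩ := hg n
  refine ⟨C * D, fun s t ht => ?_⟩
  have hf' : |f s t| ≤ C := by simpa using hC s t ht
  rw [Pi.mul_apply, Pi.mul_apply, abs_mul, mul_div_assoc]
  exact mul_le_mul hf' (hD s t ht) (abs_nonneg _) ((abs_nonneg _).trans hf')

theorem mul_fst (hf : RapidDecay f) : RapidDecay fun s t => s * f s t := fun n => by
  obtain ⟨C, hC⟩ := hf (n + 1)
  refine ⟨C, fun s t ht => ?_⟩
  have hw : 0 < 1 + |s| + t := by positivity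
  calc |s * f s t| = |s| * |f s t| := abs_mul _ _
    _ ≤ (1 + |s| + t) * (C / (1 + |s| + t) ^ (n + 1)) :=
        mul_le_mul (by linarith) (hC s t ht) (abs_nonneg _) hw.le
    _ = C / (1 + |s| + t) ^ n := by
        field_simp
        ring

theorem exists_bound (hf : RapidDecay f) :
    ∃ C, ∀ s t, 0 ≤ t → |f s t| ≤ C * ((1 + s ^ 2)⁻¹ * (1 + t ^ 2)⁻¹) := by
  obtain ⟨C, hC⟩ := hf 4
  have hC0 : 0 ≤ C := by simpa using (abs_nonneg _).trans (hC 0 0 le_rfl)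
  refine ⟨C, fun s t ht => (hC s t ht).trans ?_⟩
  rw [← mul_inv, ← div_eq_mul_inv]
  gcongr
  calc (1 + s ^ 2) * (1 + t ^ 2) ≤ (1 + |s| + t) ^ 2 * (1 + |s| + t) ^ 2 := by
        gcongr <;> nlinarith [abs_nonneg s, sq_abs s]
    _ = (1 + |s| + t) ^ 4 := by ring

theorem integrableOn_Ioi (hf : RapidDecay f) (hc : Continuous (Function.uncurry f)) (s : ℝ) :
    IntegrableOn (f s) (Ioi 0) := by
  obtain ⟨C, hC⟩ := hf.exists_bound
  refine Integrable.mono' (integrable_inv_one_add_sq.integrableOn.const_mul (C * (1 + s ^ 2)⁻¹))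
    (hc.comp (continuous_const.prodMk continuous_id)).aestronglyMeasurable ?_
  filter_upwards [ae_restrict_mem measurableSet_Ioi] with t ht
  rw [Real.norm_eq_abs, mul_assoc]
  exact hC s t (le_of_lt ht)

theorem integrable_fst (hf : RapidDecay f) (hc : Continuous (Function.uncurry f)) {t : ℝ}
    (ht : 0 ≤ t) : Integrable fun s => f s t := by
  obtain ⟨C, hC⟩ := hf.exists_bound
  refine Integrable.mono' (integrable_inv_one_add_sq.const_mul (C * (1 + t ^ 2)⁻¹))
    (hc.comp (continuous_id.prodMk continuous_const)).aestronglyMeasurable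
    (Eventually.of_forall fun s => ?_)
  rw [Real.norm_eq_abs, mul_assoc, mul_comm (1 + t ^ 2)⁻¹]
  exact hC s t ht

theorem integrable_prod (hf : RapidDecay f) (hc : Continuous (Function.uncurry f)) :
    Integrable (Function.uncurry f) ((volume : Measure ℝ).prod (volume.restrict (Ioi 0))) := by
  obtain ⟨C, hC⟩ := hf.exists_bound
  have hμ : (volume : Measure ℝ).prod (volume.restrict (Ioi 0))
      = ((volume : Measure ℝ).prod volume).restrict (univ ×ˢ Ioi (0 : ℝ)) := by
    rw [← Measure.prod_restrict, Measure.restrict_univ]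
  rw [hμ]
  refine Integrable.mono'
    ((integrable_inv_one_add_sq.mul_prod integrable_inv_one_add_sq).const_mul C).integrableOn
    hc.aestronglyMeasurable ?_
  filter_upwards [ae_restrict_mem (MeasurableSet.univ.prod measurableSet_Ioi)] with p hp
  exact hC p.1 p.2 (le_of_lt hp.2)

end RapidDecay

structure IsSchwartzHalf (w : ℝ → ℝ → ℝ) : Prop where
  smooth : Smooth₂ w
  decay : ∀ k l : ℕ, RapidDecay (pd1^[k] (pd2^[l] w))

theorem IsModelEigen.isSchwartzHalf {θ σ : ℝ} {u : ℝ → ℝ → ℝ} (hu : IsModelEigen θ u σ) :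
    IsSchwartzHalf u :=
  ⟨contDiff_infty.2 hu.smooth, hu.schwartz.rapidDecay⟩

namespace IsSchwartzHalf

variable {w f g : ℝ → ℝ → ℝ}

theorem rapidDecay (hw : IsSchwartzHalf w) : RapidDecay w := hw.decay 0 0

protected theorem pd1 (hw : IsSchwartzHalf w) : IsSchwartzHalf (pd1 w) where
  smooth := hw.smooth.pd1
  decay k l := by
    rw [hw.smooth.iterate_pd2_pd1, ← Function.iterate_succ_apply]
    exact hw.decay (k + 1) l

protected theorem pd2 (hw : IsSchwartzHalf w) : IsSchwartzHalf (pd2 w) where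
  smooth := hw.smooth.pd2
  decay k l := by
    rw [← Function.iterate_succ_apply]
    exact hw.decay k (l + 1)

protected theorem add (hf : IsSchwartzHalf f) (hg : IsSchwartzHalf g) :
    IsSchwartzHalf (f + g) where
  smooth := hf.smooth.add hg.smooth
  decay k l := by
    rw [iterate_map_add_of_smooth₂ (fun _ _ => Smooth₂.pd2_add) (fun _ => Smooth₂.pd2) l
        hf.smooth hg.smooth,
      iterate_map_add_of_smooth₂ (fun _ _ => Smooth₂.pd1_add) (fun _ => Smooth₂.pd1) k
        (hf.smooth.iterate_pd2 l) (hg.smooth.iterate_pd2 l)]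
    exact (hf.decay k l).add (hg.decay k l)

protected theorem smul (hw : IsSchwartzHalf w) (c : ℝ) : IsSchwartzHalf (c • w) where
  smooth := hw.smooth.smul c
  decay k l := by
    rw [(Function.Commute.iterate_left (fun w => pd2_smul c w) l) w,
      (Function.Commute.iterate_left (fun w => pd1_smul c w) k)]
    exact (hw.decay k l).smul c

theorem mul_fst (hw : IsSchwartzHalf w) : IsSchwartzHalf fun s t => s * w s t where
  smooth := hw.smooth.mul_fst
  decay k l := by
    rw [(Function.Commute.iterate_left pd2_mul_fst l) w]
    cases k with
    | zero => exact (hw.decay 0 l).mul_fst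
    | succ k =>
      rw [(hw.smooth.iterate_pd2 l).iterate_pd1_mul_fst]
      exact (hw.decay (k + 1) l).mul_fst.add ((hw.decay k l).smul _)

end IsSchwartzHalf

section Integrals

variable {f g : ℝ → ℝ → ℝ}

theorem intHalf_congr (h : ∀ s t, 0 < t → f s t = g s t) : intHalf f = intHalf g := by
  unfold intHalf
  congr 1 with s
  exact setIntegral_congr_fun measurableSet_Ioi fun t ht => h s t ht

theorem intHalf_add
    (hf : Integrable (Function.uncurry f) ((volume : Measure ℝ).prod (volume.restrict (Ioi 0))))
    (hg : Integrable (Function.uncurry g) ((volume : Measure ℝ).prod (volume.restrict (Ioi 0)))) :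
    intHalf (f + g) = intHalf f + intHalf g := by
  rw [intHalf, intHalf, intHalf, integral_integral hf, integral_integral hg,
    integral_integral (f := f + g) (hf.add hg)]
  exact integral_add hf hg

theorem intHalf_pd1_eq_zero (hf : Smooth₂ f) (h0 : RapidDecay f) (h1 : RapidDecay (pd1 f)) :
    intHalf (pd1 f) = 0 := by
  have hline : ∀ t ∈ Ioi (0 : ℝ), ∫ s, pd1 f s t = 0 := fun t ht =>
    integral_eq_zero_of_hasDerivAt_of_integrable (fun s => hf.hasDerivAt_pd1 s t)
      (h1.integrable_fst hf.pd1.continuous ht.le) (h0.integrable_fst hf.continuous ht.le)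
  rw [intHalf, integral_integral_swap (h1.integrable_prod hf.pd1.continuous),
    setIntegral_congr_fun measurableSet_Ioi hline, integral_zero]

theorem intHalf_pd2_eq_zero (hf : Smooth₂ f) (h0 : RapidDecay f) (h1 : RapidDecay (pd2 f))
    (hbdry : ∀ s, f s 0 = 0) : intHalf (pd2 f) = 0 := by
  have hline : ∀ s, ∫ t in Ioi 0, pd2 f s t = 0 := fun s => by
    have hderiv : ∀ t ∈ Ioi (0 : ℝ), HasDerivAt (f s) (pd2 f s t) t :=
      fun t _ => hf.hasDerivAt_pd2 s t
    have hint := h1.integrableOn_Ioi hf.pd2.continuous s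
    rw [integral_Ioi_of_hasDerivAt_of_tendsto (f := f s)
      (hf.continuous.comp (continuous_const.prodMk continuous_id)).continuousWithinAt hderiv hint
      (tendsto_zero_of_hasDerivAt_of_integrableOn_Ioi hderiv hint
        (h0.integrableOn_Ioi hf.continuous s)), hbdry, sub_zero]
  simp [intHalf, hline]

theorem intHalf_hop_mul_sub_mul_hop {θ : ℝ} {v w : ℝ → ℝ → ℝ} (hv : IsSchwartzHalf v)
    (hw : IsSchwartzHalf w) (hvN : ∀ s, pd2 v s 0 = 0) (hwN : ∀ s, pd2 w s 0 = 0) :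
    intHalf (Hop θ v * w - v * Hop θ w) = 0 := by
  have sv := hv.smooth
  have sw := hw.smooth
  have hA : Smooth₂ (v * pd1 w - pd1 v * w) := (sv.mul sw.pd1).sub (sv.pd1.mul sw)
  have hB : Smooth₂ (v * pd2 w - pd2 v * w) := (sv.mul sw.pd2).sub (sv.pd2.mul sw)
  have hA' : pd1 (v * pd1 w - pd1 v * w) = v * pd1 (pd1 w) - pd1 (pd1 v) * w := by
    rw [(sv.mul sw.pd1).pd1_sub (sv.pd1.mul sw), sv.pd1_mul sw.pd1, sv.pd1.pd1_mul sw]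
    ring
  have hB' : pd2 (v * pd2 w - pd2 v * w) = v * pd2 (pd2 w) - pd2 (pd2 v) * w := by
    rw [(sv.mul sw.pd2).pd2_sub (sv.pd2.mul sw), sv.pd2_mul sw.pd2, sv.pd2.pd2_mul sw]
    ring
  have hA'' : RapidDecay (pd1 (v * pd1 w - pd1 v * w)) :=
    hA' ▸ (hv.rapidDecay.mul hw.pd1.pd1.rapidDecay).sub (hv.pd1.pd1.rapidDecay.mul hw.rapidDecay)
  have hB'' : RapidDecay (pd2 (v * pd2 w - pd2 v * w)) :=
    hB' ▸ (hv.rapidDecay.mul hw.pd2.pd2.rapidDecay).sub (hv.pd2.pd2.rapidDecay.mul hw.rapidDecay)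
  have hsplit : Hop θ v * w - v * Hop θ w
      = pd1 (v * pd1 w - pd1 v * w) + pd2 (v * pd2 w - pd2 v * w) := by
    rw [hA', hB']
    funext s t
    simp only [Hop, Pi.add_apply, Pi.sub_apply, Pi.mul_apply]
    ring
  rw [hsplit, intHalf_add (hA''.integrable_prod hA.pd1.continuous)
      (hB''.integrable_prod hB.pd2.continuous),
    intHalf_pd1_eq_zero hA ((hv.rapidDecay.mul hw.pd1.rapidDecay).sub
      (hv.pd1.rapidDecay.mul hw.rapidDecay)) hA'',
    intHalf_pd2_eq_zero hB ((hv.rapidDecay.mul hw.pd2.rapidDecay).sub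
      (hv.pd2.rapidDecay.mul hw.rapidDecay)) hB'' fun s => by simp [hvN, hwN], add_zero]

end Integrals

/-- The function `f₀` of the statement. -/
def corrector (θ : ℝ) (u : ℝ → ℝ → ℝ) : ℝ → ℝ → ℝ :=
  ((2 * sin (2 * θ))⁻¹ * sin θ ^ 2) • (fun s t => s * (s * u s t))
    + (-(2 * sin (2 * θ))⁻¹) • pd1 (pd1 u)

section Corrector

variable {θ σ t : ℝ} {u f₀ : ℝ → ℝ → ℝ}

theorem eq_corrector (hf₀ : ∀ s t : ℝ, f₀ s t =
      (2 * sin (2*θ))⁻¹ * (sin θ ^ 2 * s^2 * u s t - pd1 (pd1 u) s t)) :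
    f₀ = corrector θ u := by
  funext s t
  simp only [corrector, hf₀, Pi.add_apply, Pi.smul_apply, smul_eq_mul]
  ring

theorem Smooth₂.corrector (hu : Smooth₂ u) : Smooth₂ (corrector θ u) :=
  (hu.mul_fst.mul_fst.smul _).add (hu.pd1.pd1.smul _)

theorem IsSchwartzHalf.corrector (hu : IsSchwartzHalf u) : IsSchwartzHalf (corrector θ u) :=
  (hu.mul_fst.mul_fst.smul _).add (hu.pd1.pd1.smul _)

theorem pd2_corrector_eq_zero (hu : Smooth₂ u) (hN : ∀ s, pd2 u s 0 = 0) (s : ℝ) :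
    pd2 (corrector θ u) s 0 = 0 := by
  rw [corrector, (hu.mul_fst.mul_fst.smul _).pd2_add (hu.pd1.pd1.smul _), pd2_smul, pd2_smul]
  simp only [Pi.add_apply, Pi.smul_apply, smul_eq_mul, pd2_mul_fst, hN,
    hu.pd1.pd2_pd1_eq_zero (hu.pd2_pd1_eq_zero hN)]
  ring

theorem hop_pd1_of_eigen (hu : Smooth₂ u) (heig : ∀ x, Hop θ u x t = σ * u x t) (s : ℝ) :
    Hop θ (pd1 u) s t = σ * pd1 u s t + 2 * sin θ * Vpot θ s t * u s t := by
  rw [hu.hop_pd1, pd1_eq_of_hasDerivAt heig ((hu.hasDerivAt_pd1 s t).const_mul σ)]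

theorem hop_pd1_pd1_of_eigen (hu : Smooth₂ u) (heig : ∀ x, Hop θ u x t = σ * u x t) (s : ℝ) :
    Hop θ (pd1 (pd1 u)) s t =
      σ * pd1 (pd1 u) s t - 2 * sin θ ^ 2 * u s t + 4 * sin θ * Vpot θ s t * pd1 u s t := by
  have h : HasDerivAt (fun x => σ * pd1 u x t + 2 * sin θ * Vpot θ x t * u x t)
      (σ * pd1 (pd1 u) s t + (2 * sin θ * (-sin θ) * u s t
        + 2 * sin θ * Vpot θ s t * pd1 u s t)) s :=
    ((hu.pd1.hasDerivAt_pd1 s t).const_mul σ).add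
      (((hasDerivAt_vpot_fst θ s t).const_mul (2 * sin θ)).mul (hu.hasDerivAt_pd1 s t))
  rw [hu.pd1.hop_pd1, pd1_eq_of_hasDerivAt (hop_pd1_of_eigen hu heig) h]
  ring

theorem hop_corrector_sub_of_eigen (hθ : sin (2 * θ) ≠ 0) (hu : Smooth₂ u)
    (heig : ∀ x, Hop θ u x t = σ * u x t) (s : ℝ) :
    Hop θ (corrector θ u) s t - σ * corrector θ u s t = -t * pd1 u s t := by
  rw [corrector, hop_add (hu.mul_fst.mul_fst.smul _) (hu.pd1.pd1.smul _), hop_smul, hop_smul]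
  simp only [Pi.add_apply, Pi.smul_apply, smul_eq_mul]
  rw [hu.mul_fst.hop_mul_fst, hu.hop_mul_fst, hu.pd1_mul_fst, hop_pd1_pd1_of_eigen hu heig, heig]
  rw [sin_two_mul] at hθ ⊢
  obtain ⟨hsin, hcos⟩ : sin θ ≠ 0 ∧ cos θ ≠ 0 := by simpa using hθ
  simp only [Pi.add_apply, Vpot]
  field_simp
  ring

theorem hop_pd1_corrector_sub_of_eigen (hθ : sin (2 * θ) ≠ 0) (hu : Smooth₂ u)
    (heig : ∀ x, Hop θ u x t = σ * u x t) (s : ℝ) :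
    Hop θ (pd1 (corrector θ u)) s t - σ * pd1 (corrector θ u) s t =
      -t * pd1 (pd1 u) s t + 2 * sin θ * Vpot θ s t * corrector θ u s t := by
  have hf : Smooth₂ (corrector θ u) := hu.corrector
  have h : HasDerivAt (fun x => σ * corrector θ u x t - t * pd1 u x t)
      (σ * pd1 (corrector θ u) s t - t * pd1 (pd1 u) s t) s :=
    ((hf.hasDerivAt_pd1 s t).const_mul σ).sub ((hu.pd1.hasDerivAt_pd1 s t).const_mul t)
  have hline : ∀ x, Hop θ (corrector θ u) x t = σ * corrector θ u x t - t * pd1 u x t :=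
    fun x => by linarith [hop_corrector_sub_of_eigen hθ hu heig x]
  rw [hf.hop_pd1, pd1_eq_of_hasDerivAt hline h]
  ring

end Corrector

/-- Lemma 2.7, first part: `(H(θ) − σ) ∂_s f₀ = −t ∂_s²u + 2 sin θ V_θ f₀` on `ℝ²₊`,
and the right-hand side is orthogonal to `u`. -/
theorem dsf0_equation (θ : ℝ) (hθ : θ ∈ Set.Ioo 0 (π/2))
    (u : ℝ → ℝ → ℝ) (σ : ℝ) (hu : IsModelEigen θ u σ)
    (f₀ : ℝ → ℝ → ℝ)
    (hf₀ : ∀ s t : ℝ, f₀ s t =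
      (2 * Real.sin (2*θ))⁻¹ * (Real.sin θ ^ 2 * s^2 * u s t - pd1 (pd1 u) s t)) :
    (∀ s t : ℝ, 0 ≤ t → Hop θ (pd1 f₀) s t - σ * pd1 f₀ s t =
        - t * pd1 (pd1 u) s t + 2 * Real.sin θ * Vpot θ s t * f₀ s t) ∧
    intHalf (fun s t =>
        (- t * pd1 (pd1 u) s t + 2 * Real.sin θ * Vpot θ s t * f₀ s t) * u s t) = 0 := by
  have hsin : sin (2 * θ) ≠ 0 :=
    (sin_pos_of_pos_of_lt_pi (by linarith [hθ.1]) (by linarith [hθ.2])).ne'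
  have hS : IsSchwartzHalf u := hu.isSchwartzHalf
  obtain rfl := eq_corrector hf₀
  have hpoint : ∀ s t : ℝ, 0 ≤ t → Hop θ (pd1 (corrector θ u)) s t
      - σ * pd1 (corrector θ u) s t
      = - t * pd1 (pd1 u) s t + 2 * Real.sin θ * Vpot θ s t * corrector θ u s t :=
    fun s t ht => hop_pd1_corrector_sub_of_eigen hsin hS.smooth (fun x => hu.eigen x t ht) s
  refine ⟨hpoint, ?_⟩
  calc _ = intHalf (Hop θ (pd1 (corrector θ u)) * u - pd1 (corrector θ u) * Hop θ u) :=
        intHalf_congr fun s t ht => by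
          simp only [Pi.sub_apply, Pi.mul_apply]
          rw [← hpoint s t ht.le, hu.eigen s t ht.le]
          ring
    _ = 0 := intHalf_hop_mul_sub_mul_hop hS.corrector.pd1 hS
        (hS.corrector.smooth.pd2_pd1_eq_zero (pd2_corrector_eq_zero hS.smooth hu.neumann))
        hu.neumann
end
end

section
/- Let θ ∈ (0, π/2), let u be a model eigenfunction of H(θ) with eigenvalue σ, and assume: (a) e^{α₀(t+⟨s⟩)} u ∈ H¹(ℝ²₊) for some α₀ > 0, where ⟨s⟩ = (s²+1)^{1/2}; (b) the spectral gap condition: there exists δ > 0 such that every smooth Schwartz-class w on ℝ²₊ with ∂_t w(s,0) = 0 for all s and ∫_{ℝ²₊} w u ds dt = 0 satisfies ∫_{ℝ²₊} (|∂_s w|² + |∂_t w|² + V_θ² w²) ds dt ≥ (σ + δ) ∫_{ℝ²₊} w² ds dt. Then u belongs to H^∞_exp: for every pair of nonnegative integers (ℓ, k) there exists α > 0 such that e^{α(t+⟨s⟩)} ∂_s^ℓ ∂_t^k u ∈ L²(ℝ²₊). -/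
open Real MeasureTheory Set

noncomputable section

/-- Square-integrability on the half-plane `{t > 0}`. -/
def L2Half (f : ℝ → ℝ → ℝ) : Prop :=
  MeasureTheory.IntegrableOn (fun p : ℝ × ℝ => (f p.1 p.2)^2)
    ((Set.univ : Set ℝ) ×ˢ Set.Ioi (0:ℝ)) volume

/-- The exponentially weighted function `e^{α(t+⟨s⟩)} f` with `⟨s⟩ = (s²+1)^{1/2}`. -/
def expWeight (α : ℝ) (f : ℝ → ℝ → ℝ) : ℝ → ℝ → ℝ :=
  fun s t => Real.exp (α * (t + Real.sqrt (s^2 + 1))) * f s t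

/-- `H¹`-membership on the half-plane (for functions smooth up to the boundary):
the function and its first partial derivatives are in `L²(ℝ²₊)`. -/
def H1Half (f : ℝ → ℝ → ℝ) : Prop :=
  L2Half f ∧ L2Half (pd1 f) ∧ L2Half (pd2 f)

/-! The Schwartz bounds make every partial derivative of `u` bounded on the closed half-plane,
so `u` is Lipschitz there. A Lipschitz function `g` with `e^{α(t+⟨s⟩)} g ∈ L²` decays pointwise
like `e^{-α(t+⟨s⟩)/2}`: near a point `p`, `|g| ≥ |g p|/2` on a square of side `≍ |g p|`, whose
weighted `L²` mass is then `≳ e^{2α(t+⟨s⟩)} |g p|⁴`. The interpolation inequality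
`|f'(a)| ≤ 2 sup |f| / h + h sup |f''|`, used with `h = e^{-α(t+⟨s⟩)/2}` along coordinate lines,
passes such pointwise decay from a function to its partial derivatives at half the rate, and
pointwise exponential decay gives weighted `L²` bounds, again at half the rate. -/

open Function
open scoped ContDiff

theorem abs_sqrt_sq_add_one_sub_le (x y : ℝ) : |√(x ^ 2 + 1) - √(y ^ 2 + 1)| ≤ |x - y| := by
  have hx := Real.sq_sqrt (show 0 ≤ x ^ 2 + 1 by positivity)
  have hy := Real.sq_sqrt (show 0 ≤ y ^ 2 + 1 by positivity)
  have hxy : x * y + 1 ≤ √(x ^ 2 + 1) * √(y ^ 2 + 1) := by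
    rw [← Real.sqrt_mul (by positivity)]
    exact Real.le_sqrt_of_sq_le (by nlinarith [sq_nonneg (x - y)])
  rw [← sq_le_sq]
  nlinarith

def bracketWeight (s t : ℝ) : ℝ := t + √(s ^ 2 + 1)

theorem expWeight_apply (α : ℝ) (f : ℝ → ℝ → ℝ) (s t : ℝ) :
    expWeight α f s t = exp (α * bracketWeight s t) * f s t := rfl

theorem bracketWeight_nonneg (s : ℝ) {t : ℝ} (ht : 0 ≤ t) : 0 ≤ bracketWeight s t :=
  add_nonneg ht (Real.sqrt_nonneg _)

theorem bracketWeight_le (s t s' t' : ℝ) :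
    bracketWeight s t ≤ bracketWeight s' t' + (|s - s'| + |t - t'|) := by
  have := abs_sqrt_sq_add_one_sub_le s s'
  unfold bracketWeight
  linarith [le_abs_self (t - t'), le_abs_self (√(s ^ 2 + 1) - √(s' ^ 2 + 1))]

theorem exp_neg_mul_bracketWeight_le {α s t s' t' : ℝ} (hα : 0 ≤ α)
    (h : |s - s'| + |t - t'| ≤ 1) :
    exp (-α * bracketWeight s' t') ≤ exp α * exp (-α * bracketWeight s t) := by
  rw [← Real.exp_add, Real.exp_le_exp]
  have := bracketWeight_le s t s' t'
  nlinarith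

theorem exp_neg_mul_sqrt_sq_add_one_le {α : ℝ} (hα : 0 < α) (s : ℝ) :
    exp (-α * √(s ^ 2 + 1)) ≤ 2 / α ^ 2 * (1 + s ^ 2)⁻¹ := by
  have hx : 0 ≤ α * √(s ^ 2 + 1) := by positivity
  have hsq : (α * √(s ^ 2 + 1)) ^ 2 = α ^ 2 * (1 + s ^ 2) := by
    rw [mul_pow, Real.sq_sqrt (by positivity)]; ring
  calc exp (-α * √(s ^ 2 + 1)) = (exp (α * √(s ^ 2 + 1)))⁻¹ := by rw [neg_mul, Real.exp_neg]
    _ ≤ (α ^ 2 * (1 + s ^ 2) / 2)⁻¹ :=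
        inv_anti₀ (by positivity) (by nlinarith [Real.quadratic_le_exp_of_nonneg hx])
    _ = 2 / α ^ 2 * (1 + s ^ 2)⁻¹ := by rw [mul_div_right_comm, mul_inv, inv_div]

theorem abs_deriv_le_of_abs_le_of_abs_deriv2_le {f f' f'' : ℝ → ℝ} {a h A B : ℝ} (hh : 0 < h)
    (hf : ∀ x, HasDerivAt f (f' x) x) (hf' : ∀ x, HasDerivAt f' (f'' x) x)
    (hA : ∀ x ∈ Icc a (a + h), |f x| ≤ A) (hB : ∀ x ∈ Icc a (a + h), |f'' x| ≤ B) :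
    |f' a| ≤ 2 * A / h + B * h := by
  have hmem : a ∈ Icc a (a + h) := ⟨le_rfl, by linarith⟩
  have hmem' : a + h ∈ Icc a (a + h) := ⟨by linarith, le_rfl⟩
  -- `f' c` is a difference quotient of `f` over the interval, and `f'` varies by at most `B h`.
  obtain ⟨c, hc, hslope⟩ := exists_hasDerivAt_eq_slope f f' (by linarith : a < a + h)
    (fun x _ => (hf x).continuousAt.continuousWithinAt) (fun x _ => hf x)
  have hfc : |f' c| ≤ 2 * A / h := by
    rw [hslope, add_sub_cancel_left, abs_div, abs_of_pos hh]
    gcongr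
    linarith [abs_sub (f (a + h)) (f a), hA _ hmem, hA _ hmem']
  have hf'c : |f' c - f' a| ≤ B * (c - a) := by
    simpa [Real.norm_eq_abs, abs_of_pos (sub_pos.2 hc.1)] using
      (convex_Icc a (a + h)).norm_image_sub_le_of_norm_hasDerivWithin_le
        (fun x _ => (hf' x).hasDerivWithinAt)
        (fun x hx => by simpa [Real.norm_eq_abs] using hB x hx) hmem (Ioo_subset_Icc_self hc)
  have hB0 : 0 ≤ B := (abs_nonneg _).trans (hB a hmem)
  have hBh : B * (c - a) ≤ B * h := by gcongr; linarith [hc.2]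
  linarith [abs_sub_abs_le_abs_sub (f' a) (f' c), abs_sub_comm (f' a) (f' c)]

theorem abs_deriv_le_of_exp_decay {f f' f'' : ℝ → ℝ} {a α w K B : ℝ}
    (hf : ∀ x, HasDerivAt f (f' x) x) (hf' : ∀ x, HasDerivAt f' (f'' x) x) (hw : 0 ≤ α * w)
    (hA : ∀ x ∈ Icc a (a + 1), |f x| ≤ K * exp (-α * w))
    (hB : ∀ x ∈ Icc a (a + 1), |f'' x| ≤ B) :
    |f' a| ≤ (2 * K + B) * exp (-(α / 2) * w) := by
  set ε := exp (-(α / 2) * w)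
  have hε : 0 < ε := Real.exp_pos _
  have hε1 : ε ≤ 1 := Real.exp_le_one_iff.2 (by nlinarith)
  have hεsq : exp (-α * w) = ε ^ 2 := by rw [← Real.exp_nat_mul]; ring_nf
  have hsub : Icc a (a + ε) ⊆ Icc a (a + 1) := Icc_subset_Icc_right (by linarith)
  calc |f' a| ≤ 2 * (K * ε ^ 2) / ε + B * ε :=
        abs_deriv_le_of_abs_le_of_abs_deriv2_le hε hf hf'
          (fun x hx => hεsq ▸ hA x (hsub hx)) (fun x hx => hB x (hsub hx))
    _ = (2 * K + B) * ε := by field_simp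

theorem mul_measureReal_le_setIntegral {X : Type*} [MeasurableSpace X] {μ : Measure X}
    {F : X → ℝ} {Q D : Set X} {c : ℝ} (hD : MeasurableSet D) (hQ : MeasurableSet Q)
    (hQD : Q ⊆ D) (hQfin : μ Q ≠ ⊤) (hF : IntegrableOn F D μ) (hF0 : ∀ x ∈ D, 0 ≤ F x)
    (hc : ∀ x ∈ Q, c ≤ F x) :
    c * μ.real Q ≤ ∫ x in D, F x ∂μ :=
  (setIntegral_ge_of_const_le_real hQ hQfin hc (hF.mono_set hQD)).trans <|
    setIntegral_mono_set hF ((ae_restrict_iff' hD).2 (ae_of_all _ hF0)) hQD.eventuallyLE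

section HalfPlane

variable {g : ℝ → ℝ → ℝ}

theorem hasDerivAt_pd1 (hg : ContDiff ℝ ∞ (uncurry g)) (s t : ℝ) :
    HasDerivAt (fun x => g x t) (pd1 g s t) s :=
  ((hg.comp (contDiff_id.prodMk contDiff_const)).differentiable (by simp) s).hasDerivAt

theorem hasDerivAt_pd2 (hg : ContDiff ℝ ∞ (uncurry g)) (s t : ℝ) :
    HasDerivAt (fun y => g s y) (pd2 g s t) t :=
  ((hg.comp (contDiff_const.prodMk contDiff_id)).differentiable (by simp) t).hasDerivAt

theorem contDiff_uncurry_pd1 (hg : ContDiff ℝ ∞ (uncurry g)) : ContDiff ℝ ∞ (uncurry (pd1 g)) := by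
  have h : uncurry (pd1 g) = fun p => fderiv ℝ (uncurry g) p (1, 0) := by
    ext ⟨s, t⟩
    have hline : HasDerivAt (fun x : ℝ => (x, t)) ((1 : ℝ), (0 : ℝ)) s :=
      (hasDerivAt_id s).prodMk (hasDerivAt_const s t)
    exact ((hg.differentiable (by simp) _).hasFDerivAt.comp_hasDerivAt s hline).deriv
  rw [h]
  exact (hg.fderiv_right le_rfl).clm_apply contDiff_const

theorem contDiff_uncurry_pd2 (hg : ContDiff ℝ ∞ (uncurry g)) : ContDiff ℝ ∞ (uncurry (pd2 g)) := by
  have h : uncurry (pd2 g) = fun p => fderiv ℝ (uncurry g) p (0, 1) := by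
    ext ⟨s, t⟩
    have hline : HasDerivAt (fun y : ℝ => (s, y)) ((0 : ℝ), (1 : ℝ)) t :=
      (hasDerivAt_const t s).prodMk (hasDerivAt_id t)
    exact ((hg.differentiable (by simp) _).hasFDerivAt.comp_hasDerivAt t hline).deriv
  rw [h]
  exact (hg.fderiv_right le_rfl).clm_apply contDiff_const

theorem contDiff_uncurry_iterate_pd (hg : ContDiff ℝ ∞ (uncurry g)) (k l : ℕ) :
    ContDiff ℝ ∞ (uncurry (pd1^[k] (pd2^[l] g))) :=
  Iterate.rec (fun f => ContDiff ℝ ∞ (uncurry f))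
    (Iterate.rec (fun f => ContDiff ℝ ∞ (uncurry f)) hg (fun _ => contDiff_uncurry_pd2) l)
    (fun _ => contDiff_uncurry_pd1) k

theorem SchwartzHalf.exists_abs_iterate_pd_le (hg : SchwartzHalf g) (k l : ℕ) :
    ∃ B, ∀ s t, 0 ≤ t → |pd1^[k] (pd2^[l] g) s t| ≤ B := by
  obtain ⟨B, hB⟩ := hg k l 0
  exact ⟨B, fun s t ht => by simpa using hB s t ht⟩

theorem abs_sub_le_of_abs_pd_le (hg : ContDiff ℝ ∞ (uncurry g)) {L : ℝ}
    (h1 : ∀ s t, 0 ≤ t → |pd1 g s t| ≤ L) (h2 : ∀ s t, 0 ≤ t → |pd2 g s t| ≤ L)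
    {s t s' t' : ℝ} (ht : 0 ≤ t) (ht' : 0 ≤ t') :
    |g s t - g s' t'| ≤ L * (|s - s'| + |t - t'|) := by
  have hvert : |g s t - g s t'| ≤ L * |t - t'| := by
    simpa [Real.norm_eq_abs] using (convex_Ici (0 : ℝ)).norm_image_sub_le_of_norm_hasDerivWithin_le
      (fun y _ => (hasDerivAt_pd2 hg s y).hasDerivWithinAt)
      (fun y hy => by simpa [Real.norm_eq_abs] using h2 s y hy) ht' ht
  have hhor : |g s t' - g s' t'| ≤ L * |s - s'| := by
    simpa [Real.norm_eq_abs] using convex_univ.norm_image_sub_le_of_norm_hasDerivWithin_le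
      (fun x _ => (hasDerivAt_pd1 hg x t').hasDerivWithinAt)
      (fun x _ => by simpa [Real.norm_eq_abs] using h1 x t' ht') (mem_univ s') (mem_univ s)
  calc |g s t - g s' t'| ≤ |g s t - g s t'| + |g s t' - g s' t'| := abs_sub_le _ _ _
    _ ≤ L * (|s - s'| + |t - t'|) := by linarith

def HasExpDecay (g : ℝ → ℝ → ℝ) : Prop :=
  ∃ α > 0, ∃ C ≥ 0, ∀ s t, 0 ≤ t → |g s t| ≤ C * exp (-α * bracketWeight s t)

/- On the square of side `r = |g p| / (4L + S)` at `p = (s, t)` the Lipschitz bound gives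
`|g| ≥ |g p| / 2`, and `bracketWeight` drops by at most `2`. -/
theorem sq_mul_sq_le_integral_expWeight {α L S : ℝ} (hα : 0 ≤ α) (hL : 0 ≤ L) (hS : 0 < S)
    (hlip : ∀ s t s' t', 0 ≤ t → 0 ≤ t' → |g s t - g s' t'| ≤ L * (|s - s'| + |t - t'|))
    (hbdd : ∀ s t, 0 ≤ t → |g s t| ≤ S) (hint : L2Half (expWeight α g))
    {s t : ℝ} (ht : 0 ≤ t) :
    (exp (α * (bracketWeight s t - 2)) * (|g s t| / 2)) ^ 2 * (|g s t| / (4 * L + S)) ^ 2 ≤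
      ∫ p in univ ×ˢ Ioi 0, expWeight α g p.1 p.2 ^ 2 := by
  set a := |g s t|
  set r := a / (4 * L + S)
  have hr : 0 ≤ r := by positivity
  have hr1 : r ≤ 1 := (div_le_one (by positivity)).2 (by linarith [hbdd s t ht])
  have hLr : L * (2 * r) ≤ a / 2 := by
    rw [← mul_assoc, mul_div_assoc', div_le_div_iff₀ (by positivity) two_pos]
    nlinarith [abs_nonneg (g s t)]
  have hvol : volume.real (Ioc s (s + r) ×ˢ Ioc t (t + r)) = r ^ 2 := by
    rw [Measure.volume_eq_prod, measureReal_prod_prod, Real.volume_real_Ioc_of_le (by linarith),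
      Real.volume_real_Ioc_of_le (by linarith)]
    ring
  rw [← hvol]
  refine mul_measureReal_le_setIntegral (MeasurableSet.univ.prod measurableSet_Ioi)
    (measurableSet_Ioc.prod measurableSet_Ioc) ?_ ?_ hint (fun _ _ => sq_nonneg _) ?_
  · rintro ⟨x, y⟩ ⟨-, hy⟩
    exact ⟨mem_univ x, ht.trans_lt hy.1⟩
  · rw [Measure.volume_eq_prod, Measure.prod_prod]
    exact ENNReal.mul_ne_top measure_Ioc_lt_top.ne measure_Ioc_lt_top.ne
  rintro ⟨x, y⟩ ⟨hx, hy⟩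
  have hdist : |x - s| + |y - t| ≤ 2 * r := by
    rw [abs_of_pos (sub_pos.2 hx.1), abs_of_pos (sub_pos.2 hy.1)]
    linarith [hx.2, hy.2]
  have hgxy : a / 2 ≤ |g x y| := by
    have := hlip x y s t (ht.trans hy.1.le) ht
    have : L * (|x - s| + |y - t|) ≤ L * (2 * r) := by gcongr
    linarith [abs_sub_abs_le_abs_sub (g s t) (g x y), abs_sub_comm (g s t) (g x y)]
  have hw : bracketWeight s t - 2 ≤ bracketWeight x y := by
    rw [abs_sub_comm x, abs_sub_comm y] at hdist
    linarith [bracketWeight_le s t x y]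
  calc (exp (α * (bracketWeight s t - 2)) * (a / 2)) ^ 2
      ≤ (exp (α * bracketWeight x y) * |g x y|) ^ 2 := by gcongr
    _ = expWeight α g x y ^ 2 := by rw [expWeight_apply, mul_pow, mul_pow, sq_abs]

theorem hasExpDecay_of_L2Half_expWeight {α L S : ℝ} (hα : 0 < α) (hL : 0 ≤ L) (hS : 0 < S)
    (hlip : ∀ s t s' t', 0 ≤ t → 0 ≤ t' → |g s t - g s' t'| ≤ L * (|s - s'| + |t - t'|))
    (hbdd : ∀ s t, 0 ≤ t → |g s t| ≤ S) (hint : L2Half (expWeight α g)) : HasExpDecay g := by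
  set M := ∫ p in univ ×ˢ Ioi 0, expWeight α g p.1 p.2 ^ 2
  set K := 4 * (4 * L + S) ^ 2 * exp (2 * α) ^ 2 * M
  refine ⟨α / 2, by positivity, max K 1, by positivity, fun s t ht => ?_⟩
  set a := |g s t|
  set e := exp (α * (bracketWeight s t - 2))
  set y := exp (-(α / 2) * bracketWeight s t)
  have hmass : (e * (a / 2)) ^ 2 * (a / (4 * L + S)) ^ 2 ≤ M :=
    sq_mul_sq_le_integral_expWeight hα.le hL hS hlip hbdd hint ht
  have hey : e * y ^ 2 * exp (2 * α) = 1 := by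
    rw [← Real.exp_nat_mul, ← Real.exp_add, ← Real.exp_add, Real.exp_eq_one_iff]
    push_cast; ring
  have ha : a ^ 4 ≤ K * y ^ 4 := by
    have hc : 4 * L + S ≠ 0 := by positivity
    calc a ^ 4 = (e * (a / 2)) ^ 2 * (a / (4 * L + S)) ^ 2
          * (4 * (4 * L + S) ^ 2 * exp (2 * α) ^ 2 * y ^ 4) := by
          rw [show (e * (a / 2)) ^ 2 * (a / (4 * L + S)) ^ 2
              * (4 * (4 * L + S) ^ 2 * exp (2 * α) ^ 2 * y ^ 4)
              = a ^ 4 * (e * y ^ 2 * exp (2 * α)) ^ 2 by field_simp; ring, hey]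
          ring
      _ ≤ M * (4 * (4 * L + S) ^ 2 * exp (2 * α) ^ 2 * y ^ 4) := by gcongr
      _ = K * y ^ 4 := by ring
  refine le_of_pow_le_pow_left₀ four_ne_zero (by positivity) ?_
  calc a ^ 4 ≤ K * y ^ 4 := ha
    _ ≤ max K 1 ^ 4 * y ^ 4 := by
        gcongr
        exact (le_max_left K 1).trans (le_self_pow₀ (le_max_right K 1) four_ne_zero)
    _ = (max K 1 * y) ^ 4 := (mul_pow _ _ _).symm

theorem abs_le_of_exp_decay_of_dist_le_one {α C : ℝ} (hα : 0 ≤ α) (hC : 0 ≤ C)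
    (hdecay : ∀ s t, 0 ≤ t → |g s t| ≤ C * exp (-α * bracketWeight s t))
    {s t s' t' : ℝ} (ht' : 0 ≤ t') (h : |s - s'| + |t - t'| ≤ 1) :
    |g s' t'| ≤ C * exp α * exp (-α * bracketWeight s t) :=
  calc |g s' t'| ≤ C * exp (-α * bracketWeight s' t') := hdecay s' t' ht'
    _ ≤ C * (exp α * exp (-α * bracketWeight s t)) := by
        gcongr; exact exp_neg_mul_bracketWeight_le hα h
    _ = C * exp α * exp (-α * bracketWeight s t) := by ring

theorem hasExpDecay_pd1 (hg : ContDiff ℝ ∞ (uncurry g)) (hd : HasExpDecay g)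
    (hB : ∃ B, ∀ s t, 0 ≤ t → |pd1 (pd1 g) s t| ≤ B) :
    HasExpDecay (pd1 g) := by
  obtain ⟨α, hα, C, hC, hdecay⟩ := hd
  obtain ⟨B, hB⟩ := hB
  have hB0 : 0 ≤ B := (abs_nonneg _).trans (hB 0 0 le_rfl)
  refine ⟨α / 2, by positivity, 2 * (C * exp α) + B, by positivity, fun s t ht => ?_⟩
  refine abs_deriv_le_of_exp_decay (f' := fun x => pd1 g x t)
    (fun x => hasDerivAt_pd1 hg x t) (fun x => hasDerivAt_pd1 (contDiff_uncurry_pd1 hg) x t)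
    (mul_nonneg hα.le (bracketWeight_nonneg s ht)) (fun x hx => ?_) (fun x _ => hB x t ht)
  refine abs_le_of_exp_decay_of_dist_le_one hα.le hC hdecay ht ?_
  rw [sub_self, abs_zero, add_zero, abs_sub_comm, abs_of_nonneg (by linarith [hx.1])]
  linarith [hx.2]

theorem hasExpDecay_pd2 (hg : ContDiff ℝ ∞ (uncurry g)) (hd : HasExpDecay g)
    (hB : ∃ B, ∀ s t, 0 ≤ t → |pd2 (pd2 g) s t| ≤ B) :
    HasExpDecay (pd2 g) := by
  obtain ⟨α, hα, C, hC, hdecay⟩ := hd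
  obtain ⟨B, hB⟩ := hB
  have hB0 : 0 ≤ B := (abs_nonneg _).trans (hB 0 0 le_rfl)
  refine ⟨α / 2, by positivity, 2 * (C * exp α) + B, by positivity, fun s t ht => ?_⟩
  refine abs_deriv_le_of_exp_decay
    (fun y => hasDerivAt_pd2 hg s y) (fun y => hasDerivAt_pd2 (contDiff_uncurry_pd2 hg) s y)
    (mul_nonneg hα.le (bracketWeight_nonneg s ht)) (fun y hy => ?_)
    (fun y hy => hB s y (ht.trans hy.1))
  refine abs_le_of_exp_decay_of_dist_le_one hα.le hC hdecay (ht.trans hy.1) ?_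
  rw [sub_self, abs_zero, zero_add, abs_sub_comm, abs_of_nonneg (by linarith [hy.1])]
  linarith [hy.2]

theorem hasExpDecay_iterate_pd (hg : ContDiff ℝ ∞ (uncurry g)) (hS : SchwartzHalf g)
    (hd : HasExpDecay g) (l k : ℕ) : HasExpDecay (pd1^[l] (pd2^[k] g)) := by
  induction l with
  | zero =>
    induction k with
    | zero => exact hd
    | succ n ih =>
      rw [iterate_succ_apply']
      refine hasExpDecay_pd2 (contDiff_uncurry_iterate_pd hg 0 n) ih ?_
      simpa only [iterate_succ_apply', iterate_zero_apply] using
        hS.exists_abs_iterate_pd_le 0 (n + 1 + 1)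
  | succ n ih =>
    rw [iterate_succ_apply']
    refine hasExpDecay_pd1 (contDiff_uncurry_iterate_pd hg n k) ih ?_
    simpa only [iterate_succ_apply'] using hS.exists_abs_iterate_pd_le (n + 1 + 1) k

theorem HasExpDecay.exists_L2Half_expWeight (hd : HasExpDecay g) (hc : Continuous (uncurry g)) :
    ∃ α > 0, L2Half (expWeight α g) := by
  obtain ⟨α, hα, C, -, hdecay⟩ := hd
  refine ⟨α / 2, by positivity, ?_⟩
  have hdom : Integrable
      (fun p : ℝ × ℝ => (C ^ 2 * (2 / α ^ 2) * (1 + p.1 ^ 2)⁻¹) * exp (-α * p.2))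
      ((volume : Measure (ℝ × ℝ)).restrict (univ ×ˢ Ioi 0)) := by
    rw [Measure.volume_eq_prod, ← Measure.prod_restrict, Measure.restrict_univ]
    exact (integrable_inv_one_add_sq.const_mul _).mul_prod (exp_neg_integrableOn_Ioi 0 hα)
  have hmeas : Continuous fun p : ℝ × ℝ => expWeight (α / 2) g p.1 p.2 ^ 2 := by
    have hc' : Continuous fun p : ℝ × ℝ => g p.1 p.2 := hc
    simp only [expWeight_apply, bracketWeight]
    fun_prop
  refine hdom.mono' hmeas.aestronglyMeasurable
    ((ae_restrict_iff' (MeasurableSet.univ.prod measurableSet_Ioi)).2 (ae_of_all _ ?_))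
  rintro ⟨s, t⟩ ⟨-, ht⟩
  have hsplit : exp (-α * bracketWeight s t) = exp (-α * √(s ^ 2 + 1)) * exp (-α * t) := by
    rw [← Real.exp_add, bracketWeight]; ring_nf
  have hsq : exp (α / 2 * bracketWeight s t) ^ 2 * exp (-α * bracketWeight s t) ^ 2
      = exp (-α * bracketWeight s t) := by
    rw [← mul_pow, ← Real.exp_add, ← Real.exp_nat_mul]; ring_nf
  calc ‖expWeight (α / 2) g s t ^ 2‖
      = exp (α / 2 * bracketWeight s t) ^ 2 * |g s t| ^ 2 := by
        rw [Real.norm_eq_abs, abs_of_nonneg (sq_nonneg _), expWeight_apply, mul_pow, sq_abs]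
    _ ≤ exp (α / 2 * bracketWeight s t) ^ 2 * (C * exp (-α * bracketWeight s t)) ^ 2 := by
        gcongr; exact hdecay s t ht.le
    _ = C ^ 2 * (exp (-α * √(s ^ 2 + 1)) * exp (-α * t)) := by
        rw [mul_pow, mul_left_comm, hsq, hsplit]
    _ ≤ C ^ 2 * (2 / α ^ 2 * (1 + s ^ 2)⁻¹ * exp (-α * t)) := by
        gcongr; exact exp_neg_mul_sqrt_sq_add_one_le hα s
    _ = _ := by ring

end HalfPlane

theorem groundstate_Hinfty_exp_general (θ : ℝ)
    (u : ℝ → ℝ → ℝ) (σ : ℝ) (hu : IsModelEigen θ u σ)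
    (hdecay : ∃ α₀ > 0, H1Half (expWeight α₀ u)) :
    ∀ l k : ℕ, ∃ α > 0, L2Half (expWeight α (pd1^[l] (pd2^[k] u))) := by
  intro l k
  obtain ⟨α₀, hα₀, hL2, -⟩ := hdecay
  have hsmooth : ContDiff ℝ ∞ (uncurry u) := contDiff_infty.2 hu.smooth
  obtain ⟨B₁, hB₁⟩ := hu.schwartz.exists_abs_iterate_pd_le 1 0
  obtain ⟨B₂, hB₂⟩ := hu.schwartz.exists_abs_iterate_pd_le 0 1
  obtain ⟨S, hS⟩ := hu.schwartz.exists_abs_iterate_pd_le 0 0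
  have hL : 0 ≤ max B₁ B₂ := (abs_nonneg _).trans ((hB₁ 0 0 le_rfl).trans (le_max_left _ _))
  have hlip : ∀ s t s' t', 0 ≤ t → 0 ≤ t' →
      |u s t - u s' t'| ≤ max B₁ B₂ * (|s - s'| + |t - t'|) := fun s t s' t' ht ht' =>
    abs_sub_le_of_abs_pd_le hsmooth (fun s t ht => (hB₁ s t ht).trans (le_max_left _ _))
      (fun s t ht => (hB₂ s t ht).trans (le_max_right _ _)) ht ht'
  have hu_decay : HasExpDecay u :=
    hasExpDecay_of_L2Half_expWeight hα₀ hL (lt_max_of_lt_right one_pos) hlip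
      (fun s t ht => (hS s t ht).trans (le_max_left S 1)) hL2
  exact (hasExpDecay_iterate_pd hsmooth hu.schwartz hu_decay l k).exists_L2Half_expWeight
    (contDiff_uncurry_iterate_pd hsmooth l k).continuous

/-- Proposition 2.2: the groundstate `u` belongs to `H^∞_exp`: every iterated partial
derivative `∂_s^ℓ ∂_t^k u` has exponential decay in `L²(ℝ²₊)`. -/
theorem groundstate_Hinfty_exp (θ : ℝ) (hθ : θ ∈ Set.Ioo 0 (π/2))
    (u : ℝ → ℝ → ℝ) (σ : ℝ) (hu : IsModelEigen θ u σ)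
    (hdecay : ∃ α₀ > 0, H1Half (expWeight α₀ u))
    (hgap : ∃ δ > 0, ∀ w : ℝ → ℝ → ℝ,
      (∀ n : ℕ, ContDiff ℝ n (fun p : ℝ × ℝ => w p.1 p.2)) → SchwartzHalf w →
      (∀ s : ℝ, pd2 w s 0 = 0) → intHalf (fun s t => w s t * u s t) = 0 →
      intHalf (fun s t => (pd1 w s t)^2 + (pd2 w s t)^2 + (Vpot θ s t)^2 * (w s t)^2) ≥
        (σ + δ) * intHalf (fun s t => (w s t)^2)) :
    ∀ l k : ℕ, ∃ α > 0, L2Half (expWeight α (pd1^[l] (pd2^[k] u))) :=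
  groundstate_Hinfty_exp_general θ u σ hu hdecay
end
end
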